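/- arXiv:2409.08290 — 6 statements merged into one kernel-verified Lean document; each statement's English description precedes it below -/
import Mathlib

section
/- Consider an integrate-and-fire neuron without leakage and with reset-by-subtraction: v(0) = 0, s_out(t) = 1 if v(t-1) + I(t) ≥ θ and 0 otherwise, and v(t) = v(t-1) + I(t) - θ·s_out(t), where I(t) = Σ_j w_j·s_j(t) with input spikes s_j(t) ∈ {0,1} and weights w_j. If 0 ≤ I(t) < θ for every t with 1 ≤ t ≤ T, then the total output spike count n = Σ_{t=1}^{T} s_out(t) equals ⌊(Σ_j w_j·k_j)/θ⌋, where k_j = Σ_{t=1}^{T} s_j(t). -/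
/-- For an integrate-and-fire neuron with reset-by-subtraction and
0 ≤ I(t) < θ, the total output spike count equals ⌊(Σ_j w_j k_j)/θ⌋. -/
theorem if_neuron_spike_count
    (θ : ℝ) (hθ : 0 < θ) (T : ℕ) (hT : 1 ≤ T)
    (J : Type*) [Fintype J] (w : J → ℝ) (s : J → ℕ → ℝ)
    (v sout : ℕ → ℝ)
    (hsbin : ∀ j t, s j t = 0 ∨ s j t = 1)
    (hv0 : v 0 = 0)
    (hs : ∀ t, 1 ≤ t → t ≤ T →
      sout t = if θ ≤ v (t - 1) + (∑ j, w j * s j t) then 1 else 0)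
    (hv : ∀ t, 1 ≤ t → t ≤ T →
      v t = v (t - 1) + (∑ j, w j * s j t) - θ * sout t)
    (hI : ∀ t, 1 ≤ t → t ≤ T →
      0 ≤ (∑ j, w j * s j t) ∧ (∑ j, w j * s j t) < θ) :
    (∑ t ∈ Finset.Icc 1 T, sout t) =
      ((⌊(∑ j, w j * (∑ t ∈ Finset.Icc 1 T, s j t)) / θ⌋ : ℤ) : ℝ) := by
  -- cumulative input
  set I : ℕ → ℝ := fun t => ∑ j, w j * s j t with hIdef
  -- main invariant
  have key : ∀ t, t ≤ T → 0 ≤ v t ∧ v t < θ ∧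
      v t = (∑ τ ∈ Finset.Icc 1 t, I τ) - θ * (∑ τ ∈ Finset.Icc 1 t, sout τ) := by
    intro t
    induction t with
    | zero => intro _; simp [hv0, hθ]
    | succ n ih =>
      intro hn1
      have hn : n ≤ T := Nat.le_of_succ_le hn1
      obtain ⟨h0, h1, h2⟩ := ih hn
      have h1n : 1 ≤ n + 1 := Nat.le_add_left 1 n
      obtain ⟨hI0, hI1⟩ := hI (n+1) h1n hn1
      have hvs : v (n+1) = v n + I (n+1) - θ * sout (n+1) := by
        simpa using hv (n+1) h1n hn1
      have hss : sout (n+1) = if θ ≤ v n + I (n+1) then 1 else 0 := by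
        simpa using hs (n+1) h1n hn1
      have hsum1 : (∑ τ ∈ Finset.Icc 1 (n+1), I τ) = (∑ τ ∈ Finset.Icc 1 n, I τ) + I (n+1) := by
        rw [← Finset.sum_Icc_succ_top h1n]
      have hsum2 : (∑ τ ∈ Finset.Icc 1 (n+1), sout τ)
          = (∑ τ ∈ Finset.Icc 1 n, sout τ) + sout (n+1) := by
        rw [← Finset.sum_Icc_succ_top h1n]
      by_cases hc : θ ≤ v n + I (n+1)
      · rw [hss, if_pos hc] at hvs
        refine ⟨by linarith, by linarith, ?_⟩
        rw [hvs, hsum1, hsum2, hss, if_pos hc]; ring_nf; linarith [h2]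
      · rw [hss, if_neg hc] at hvs
        push_neg at hc
        refine ⟨by linarith, by linarith, ?_⟩
        rw [hvs, hsum1, hsum2, hss, if_neg (not_le.mpr hc)]; ring_nf; linarith [h2]
  obtain ⟨h0, h1, h2⟩ := key T le_rfl
  -- integer spike count
  set f : ℕ → ℤ := fun t => if θ ≤ v (t - 1) + I t then 1 else 0 with hf
  set N : ℤ := ∑ τ ∈ Finset.Icc 1 T, f τ with hN
  have hNout : (∑ τ ∈ Finset.Icc 1 T, sout τ) = (N : ℝ) := by
    rw [hN, Int.cast_sum]
    apply Finset.sum_congr rfl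
    intro t ht
    rw [Finset.mem_Icc] at ht
    rw [hs t ht.1 ht.2, hf]
    simp only [hIdef]
    by_cases hc : θ ≤ v (t - 1) + ∑ j, w j * s j t
    · rw [if_pos hc, if_pos hc]; norm_num
    · rw [if_neg hc, if_neg hc]; norm_num
  -- swap sums
  have hswap : (∑ j, w j * (∑ t ∈ Finset.Icc 1 T, s j t)) = ∑ τ ∈ Finset.Icc 1 T, I τ := by
    rw [Finset.sum_comm' ]
    · apply Finset.sum_congr rfl
      intro t _
      rw [Finset.mul_sum]
    all_goals simp
  have hfl : ⌊(∑ τ ∈ Finset.Icc 1 T, I τ) / θ⌋ = N := by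
    have hS : (∑ τ ∈ Finset.Icc 1 T, I τ) = θ * N + v T := by
      rw [h2, hNout]; ring
    rw [Int.floor_eq_iff]
    constructor
    · rw [hS, le_div_iff₀ hθ]; nlinarith
    · rw [hS, div_lt_iff₀ hθ]; push_cast; nlinarith
  rw [hNout, hswap.symm] at *
  rw [hfl]
end

section
/- Under the hypotheses of the previous statement (integrate-and-fire dynamics with v(0) = 0, reset-by-subtraction, threshold θ > 0, and 0 ≤ I(t) = Σ_j w_j·s_j(t) < θ for all 1 ≤ t ≤ T), the quantized-ANN activation function h(z) := (1/T)·⌊z·T/θ⌋ applied to the QNN pre-activation z := (Σ_j w_j·k_j)/T, where k_j = Σ_{t=1}^{T} s_j(t), exactly equals the SNN's average output firing rate n/T, where n = Σ_{t=1}^{T} s_out(t). -/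
/-- The QNN activation h(z) = (1/T)·⌊z·T/θ⌋ applied to the QNN
pre-activation z = (Σ_j w_j k_j)/T equals the SNN's average firing rate n/T. -/
theorem qnn_activation_matches_snn_rate
    (θ : ℝ) (hθ : 0 < θ) (T : ℕ) (hT : 1 ≤ T)
    (J : Type*) [Fintype J] (w : J → ℝ) (s : J → ℕ → ℝ)
    (v sout : ℕ → ℝ)
    (hsbin : ∀ j t, s j t = 0 ∨ s j t = 1)
    (hv0 : v 0 = 0)
    (hs : ∀ t, 1 ≤ t → t ≤ T →
      sout t = if θ ≤ v (t - 1) + (∑ j, w j * s j t) then 1 else 0)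
    (hv : ∀ t, 1 ≤ t → t ≤ T →
      v t = v (t - 1) + (∑ j, w j * s j t) - θ * sout t)
    (hI : ∀ t, 1 ≤ t → t ≤ T →
      0 ≤ (∑ j, w j * s j t) ∧ (∑ j, w j * s j t) < θ)
    (h : ℝ → ℝ)
    (hdef : ∀ z : ℝ, h z = (1 / (T : ℝ)) * ((⌊z * T / θ⌋ : ℤ) : ℝ))
    (z : ℝ)
    (hz : z = (∑ j, w j * (∑ t ∈ Finset.Icc 1 T, s j t)) / (T : ℝ)) :
    h z = (∑ t ∈ Finset.Icc 1 T, sout t) / (T : ℝ) := by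
  set I : ℕ → ℝ := fun t => ∑ j, w j * s j t with hIdef
  have key : ∀ t, t ≤ T →
      v t = (∑ τ ∈ Finset.Icc 1 t, I τ) - θ * (∑ τ ∈ Finset.Icc 1 t, sout τ) ∧
      0 ≤ v t ∧ v t < θ ∧ ∃ m : ℕ, (∑ τ ∈ Finset.Icc 1 t, sout τ) = m := by
    intro t
    induction t with
    | zero =>
      intro _
      refine ⟨by simp [hv0], by simp [hv0], by simpa [hv0] using hθ, 0, by simp⟩
    | succ n ih =>
      intro hn1
      have hn : n ≤ T := Nat.le_of_succ_le hn1
      obtain ⟨hvn, hv0n, hvθn, m, hm⟩ := ih hn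
      have h1 : 1 ≤ n + 1 := Nat.succ_le_succ (Nat.zero_le n)
      have hsout := hs (n+1) h1 hn1
      have hvv := hv (n+1) h1 hn1
      have hIb := hI (n+1) h1 hn1
      simp only [Nat.add_sub_cancel] at hsout hvv
      rw [Finset.sum_Icc_succ_top h1, Finset.sum_Icc_succ_top h1]
      by_cases hc : θ ≤ v n + (∑ j, w j * s j (n+1))
      · rw [if_pos hc] at hsout
        refine ⟨?_, ?_, ?_, m + 1, ?_⟩
        · rw [hvv, hsout, hvn]; simp only [hIdef]; ring
        · rw [hvv, hsout]; linarith
        · rw [hvv, hsout]; linarith [hIb.2]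
        · rw [hsout, hm]; push_cast; ring
      · rw [if_neg hc] at hsout
        push_neg at hc
        refine ⟨?_, ?_, ?_, m, ?_⟩
        · rw [hvv, hsout, hvn]; simp only [hIdef]; ring
        · rw [hvv, hsout]; linarith [hIb.1]
        · rw [hvv, hsout]; linarith
        · rw [hsout, hm]; push_cast; ring
  obtain ⟨hvT, hvT0, hvTθ, m, hm⟩ := key T le_rfl
  have hTpos : (0:ℝ) < T := by exact_mod_cast hT
  have hzT : z * T = ∑ τ ∈ Finset.Icc 1 T, I τ := by
    rw [hz, div_mul_cancel₀ _ (ne_of_gt hTpos)]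
    simp only [hIdef, Finset.mul_sum]
    exact Finset.sum_comm
  have hsum : (∑ τ ∈ Finset.Icc 1 T, I τ) = θ * m + v T := by
    rw [hvT, hm]; ring
  have hfloor : ⌊z * T / θ⌋ = (m : ℤ) := by
    rw [hzT, hsum, Int.floor_eq_iff]
    constructor
    · rw [le_div_iff₀ hθ]; push_cast; nlinarith
    · rw [div_lt_iff₀ hθ]; push_cast; nlinarith
  rw [hdef, hfloor, hm]
  push_cast
  field_simp
end

section
/- Let T ≥ 1 be a natural number, N > 0, 0 ≤ γ ≤ 1, Ē ≥ 0 (dense per-bit movement energy), Ẽ ≥ 0 (sparse per-bit movement energy) and Ew ≥ 0 (per-access weight energy) with Ẽ + Ew > 0, and let b = ⌈log₂(T+1)⌉ and F(λ) = (b·λ + Ew)/(Ẽ + Ew). With the best-case SNN spike rate s_r = (1-γ)/T, the sparse SNN data-movement energy Ẽ_SNN = N·T·s_r·(Ẽ + Ew) is at most the dense QNN data-movement energy Ē_QNN = N·(b·Ē + Ew) if and only if γ ≥ 1 - F(Ē). -/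
/-- Best-case spike rate s_r = (1-γ)/T: the sparse SNN
data-movement energy is at most the dense QNN data-movement energy iff
γ ≥ 1 - F(Ē), where F(λ) = (b·λ + Ew)/(Ẽ + Ew). -/
theorem snn_data_best_vs_dense_qnn
    (T : ℕ) (hT : 1 ≤ T)
    (N γ Edense Esparse Ew s_r : ℝ)
    (hN : 0 < N) (hγ0 : 0 ≤ γ) (hγ1 : γ ≤ 1)
    (hEd : 0 ≤ Edense) (hEs : 0 ≤ Esparse) (hEw : 0 ≤ Ew)
    (hpos : 0 < Esparse + Ew)
    (F : ℝ → ℝ)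
    (hF : ∀ lam, F lam = (((Nat.clog 2 (T + 1) : ℕ) : ℝ) * lam + Ew) / (Esparse + Ew))
    (hs : s_r = (1 - γ) / (T : ℝ)) :
    N * (T : ℝ) * s_r * (Esparse + Ew) ≤
        N * (((Nat.clog 2 (T + 1) : ℕ) : ℝ) * Edense + Ew) ↔
      1 - F Edense ≤ γ := by
  have hTpos : (0 : ℝ) < (T : ℝ) := by exact_mod_cast hT
  set b : ℝ := ((Nat.clog 2 (T + 1) : ℕ) : ℝ)
  have hL : N * (T : ℝ) * s_r * (Esparse + Ew) = N * ((1 - γ) * (Esparse + Ew)) := by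
    rw [hs]; field_simp
  rw [hL, hF, mul_le_mul_iff_right₀ hN, ← le_div_iff₀ hpos]
  constructor <;> intro <;> linarith
end

section
/- Let T ≥ 1 be a natural number, N > 0, 0 ≤ γ < 1, Ẽ ≥ 0 and Ew ≥ 0 with Ẽ + Ew > 0, and let b = ⌈log₂(T+1)⌉ and F(λ) = (b·λ + Ew)/(Ẽ + Ew). With the average-case SNN spike rate s_r = (1-γ)·(1/T + 1)/2, the sparse SNN data-movement energy Ẽ_SNN = N·T·s_r·(Ẽ + Ew) is at most the sparse QNN data-movement energy Ẽ_QNN = N·(1-γ)·(b·Ẽ + Ew) if and only if T ≤ 2·F(Ẽ) - 1. -/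
/-- Average-case spike rate s_r = (1-γ)(1/T+1)/2: the sparse SNN
data-movement energy is at most the sparse QNN data-movement energy iff
T ≤ 2·F(Ẽ) - 1. -/
theorem snn_data_avg_vs_sparse_qnn
    (T : ℕ) (hT : 1 ≤ T)
    (N γ Esparse Ew s_r : ℝ)
    (hN : 0 < N) (hγ0 : 0 ≤ γ) (hγ1 : γ < 1)
    (hEs : 0 ≤ Esparse) (hEw : 0 ≤ Ew)
    (hpos : 0 < Esparse + Ew)
    (F : ℝ → ℝ)
    (hF : ∀ lam, F lam = (((Nat.clog 2 (T + 1) : ℕ) : ℝ) * lam + Ew) / (Esparse + Ew))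
    (hs : s_r = (1 - γ) * (1 / (T : ℝ) + 1) / 2) :
    N * (T : ℝ) * s_r * (Esparse + Ew) ≤
        N * (1 - γ) * (((Nat.clog 2 (T + 1) : ℕ) : ℝ) * Esparse + Ew) ↔
      (T : ℝ) ≤ 2 * F Esparse - 1 := by
  set b : ℝ := ((Nat.clog 2 (T + 1) : ℕ) : ℝ) with hb
  have hTpos : (0:ℝ) < T := by exact_mod_cast hT
  have h1γ : 0 < 1 - γ := by linarith
  have hL : N * (T : ℝ) * s_r * (Esparse + Ew)
      = N * (1 - γ) * (((T : ℝ) + 1) / 2 * (Esparse + Ew)) := by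
    rw [hs]; field_simp; ring
  have hFe : 2 * F Esparse - 1 = (2 * (b * Esparse + Ew) - (Esparse + Ew)) / (Esparse + Ew) := by
    rw [hF]; field_simp
  rw [hL, hFe, le_div_iff₀ hpos, mul_le_mul_iff_right₀ (by positivity : 0 < N * (1 - γ))]
  constructor
  · intro h; nlinarith
  · intro h; nlinarith
end

section
/- Let T ≥ 1 be a natural number, N > 0, 0 ≤ γ < 1, Ē ≥ 0, Ẽ ≥ 0 and Ew ≥ 0 with Ẽ + Ew > 0, and let b = ⌈log₂(T+1)⌉ and F(λ) = (b·λ + Ew)/(Ẽ + Ew). With the average-case SNN spike rate s_r = (1-γ)·(1/T + 1)/2, the sparse SNN data-movement energy Ẽ_SNN = N·T·s_r·(Ẽ + Ew) is at most the dense QNN data-movement energy Ē_QNN = N·(b·Ē + Ew) if and only if T ≤ 2·F(Ē)/(1-γ) - 1. -/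
/-- Average-case spike rate s_r = (1-γ)(1/T+1)/2: the sparse SNN
data-movement energy is at most the dense QNN data-movement energy iff
T ≤ 2·F(Ē)/(1-γ) - 1. -/
theorem snn_data_avg_vs_dense_qnn
    (T : ℕ) (hT : 1 ≤ T)
    (N γ Edense Esparse Ew s_r : ℝ)
    (hN : 0 < N) (hγ0 : 0 ≤ γ) (hγ1 : γ < 1)
    (hEd : 0 ≤ Edense) (hEs : 0 ≤ Esparse) (hEw : 0 ≤ Ew)
    (hpos : 0 < Esparse + Ew)
    (F : ℝ → ℝ)
    (hF : ∀ lam, F lam = (((Nat.clog 2 (T + 1) : ℕ) : ℝ) * lam + Ew) / (Esparse + Ew))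
    (hs : s_r = (1 - γ) * (1 / (T : ℝ) + 1) / 2) :
    N * (T : ℝ) * s_r * (Esparse + Ew) ≤
        N * (((Nat.clog 2 (T + 1) : ℕ) : ℝ) * Edense + Ew) ↔
      (T : ℝ) ≤ 2 * F Edense / (1 - γ) - 1 := by
  have hT0 : (0:ℝ) < T := by exact_mod_cast hT
  have hg : (0:ℝ) < 1 - γ := by linarith
  set b := ((Nat.clog 2 (T + 1) : ℕ) : ℝ) with hb
  have key2 : ((T:ℝ) ≤ 2 * F Edense / (1 - γ) - 1) ↔
      ((T:ℝ) + 1) * (1 - γ) * (Esparse + Ew) ≤ 2 * (b * Edense + Ew) := by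
    rw [hF, le_sub_iff_add_le, le_div_iff₀ hg, ← mul_div_assoc, le_div_iff₀ hpos]
  have key1 : N * (T:ℝ) * s_r * (Esparse + Ew)
      = N * (((T:ℝ) + 1) * (1 - γ) * (Esparse + Ew) / 2) := by
    rw [hs]; field_simp; ring
  rw [key1, key2, mul_le_mul_iff_right₀ hN, div_le_iff₀ (by norm_num : (0:ℝ) < 2)]
  constructor <;> intro h <;> linarith
end

section
/- Let T ≥ 1 be a natural number, N > 0, 0 ≤ γ < 1, Ẽ ≥ 0 and Ew ≥ 0 with Ẽ + Ew > 0, and let b = ⌈log₂(T+1)⌉ and F(λ) = (b·λ + Ew)/(Ẽ + Ew). With the worst-case SNN spike rate s_r = 1-γ, the sparse SNN data-movement energy Ẽ_SNN = N·T·s_r·(Ẽ + Ew) is at most the sparse QNN data-movement energy Ẽ_QNN = N·(1-γ)·(b·Ẽ + Ew) if and only if T ≤ F(Ẽ). -/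
theorem snn_data_worst_vs_sparse_qnn_general
    (T : ℕ)
    (N γ Esparse Ew s_r : ℝ)
    (hN : 0 < N) (hγ1 : γ < 1)
    (hpos : 0 < Esparse + Ew)
    (F : ℝ → ℝ)
    (hF : ∀ lam, F lam = (((Nat.clog 2 (T + 1) : ℕ) : ℝ) * lam + Ew) / (Esparse + Ew))
    (hs : s_r = 1 - γ) :
    N * (T : ℝ) * s_r * (Esparse + Ew) ≤
        N * (1 - γ) * (((Nat.clog 2 (T + 1) : ℕ) : ℝ) * Esparse + Ew) ↔
      (T : ℝ) ≤ F Esparse := by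
  subst hs
  have hactive : 0 < N * (1 - γ) := mul_pos hN (sub_pos.mpr hγ1)
  rw [hF, le_div_iff₀ hpos,
    show N * T * (1 - γ) * (Esparse + Ew) = N * (1 - γ) * (T * (Esparse + Ew)) by ring]
  exact mul_le_mul_iff_of_pos_left hactive

/-- Worst-case spike rate s_r = 1-γ: the sparse SNN data-movement
energy is at most the sparse QNN data-movement energy iff T ≤ F(Ẽ). -/
theorem snn_data_worst_vs_sparse_qnn
    (T : ℕ) (hT : 1 ≤ T)
    (N γ Esparse Ew s_r : ℝ)
    (hN : 0 < N) (hγ0 : 0 ≤ γ) (hγ1 : γ < 1)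
    (hEs : 0 ≤ Esparse) (hEw : 0 ≤ Ew)
    (hpos : 0 < Esparse + Ew)
    (F : ℝ → ℝ)
    (hF : ∀ lam, F lam = (((Nat.clog 2 (T + 1) : ℕ) : ℝ) * lam + Ew) / (Esparse + Ew))
    (hs : s_r = 1 - γ) :
    N * (T : ℝ) * s_r * (Esparse + Ew) ≤
        N * (1 - γ) * (((Nat.clog 2 (T + 1) : ℕ) : ℝ) * Esparse + Ew) ↔
      (T : ℝ) ≤ F Esparse :=
  snn_data_worst_vs_sparse_qnn_general T N γ Esparse Ew s_r hN hγ1 hpos F hF hs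
end
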